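/- arXiv:1907.05824 — 4 statements merged into one kernel-verified Lean document; each statement's English description precedes it below -/
import Mathlib

section
/- For a word x in the alphabet of positive integers and a partition λ, the Schur operator product u_x applied to λ is nonzero if and only if for every i ≥ 1, α_i(x) ≤ λ'_i − λ'_{i+1}, where α_i(x) = max over suffixes x̃ of x of (number of occurrences of i+1 in x̃ minus number of occurrences of i in x̃), and λ' denotes the conjugate partition. Moreover, when nonzero, u_x(λ) is the partition whose conjugate has columns λ'_i + w_i(x), where w_i(x) is the number of occurrences of i in x. -/
/-- A partition, represented by its column lengths (the conjugate):
`c i` is the number of boxes in column `i`. -/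
def IsPartition (c : ℕ+ → ℕ) : Prop :=
  (∀ i : ℕ+, c (i + 1) ≤ c i) ∧ ∃ N : ℕ+, ∀ i : ℕ+, N ≤ i → c i = 0

open Classical in
/-- The Schur operator `u_i`: add a box to column `i` if the result is a
partition, else `none` (representing `0`). -/
noncomputable def addBox (i : ℕ+) (c : ℕ+ → ℕ) : Option (ℕ+ → ℕ) :=
  if IsPartition (Function.update c i (c i + 1)) then
    some (Function.update c i (c i + 1))
  else none

/-- `u_x = u_{x_1} ∘ ⋯ ∘ u_{x_l}` for a word `x = x_1 ⋯ x_l`. -/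
noncomputable def schurWord (x : List ℕ+) (c : ℕ+ → ℕ) : Option (ℕ+ → ℕ) :=
  x.foldr (fun i o => o.bind (addBox i)) (some c)

/-- `α_i(x)`: the maximum over suffixes `s` of `x` of `w_{i+1}(s) - w_i(s)`. -/
def alpha (i : ℕ+) (x : List ℕ+) : ℕ :=
  (x.tails.map (fun s => s.count (i + 1) - s.count i)).foldr max 0

/-! A word is applied letter by letter from the right, so `u_x(λ) ≠ 0` exactly when every
intermediate shape, obtained by adding the letters of a suffix `s` of `x` as boxes in their
columns, is a partition. The column condition for that shape is
`w_{i+1}(s) - w_i(s) ≤ λ'_i - λ'_{i+1}`, and `α_i(x)` is the maximum of the left side over all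
suffixes. -/

lemma foldr_max_zero_le_iff (l : List ℕ) (n : ℕ) :
    l.foldr max 0 ≤ n ↔ ∀ a ∈ l, a ≤ n := by
  induction l with
  | nil => simp
  | cons a l ih => simp [ih]

lemma alpha_le_iff (i : ℕ+) (x : List ℕ+) (n : ℕ) :
    alpha i x ≤ n ↔ ∀ s ∈ x.tails, s.count (i + 1) - s.count i ≤ n := by
  simp [alpha, foldr_max_zero_le_iff]

lemma isPartition_add_count_iff {c : ℕ+ → ℕ} (hc : IsPartition c) (s : List ℕ+) :
    IsPartition (fun i => c i + s.count i) ↔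
      ∀ i : ℕ+, s.count (i + 1) - s.count i ≤ c i - c (i + 1) := by
  have eventually_zero : ∃ N : ℕ+, ∀ i : ℕ+, N ≤ i → c i + s.count i = 0 := by
    obtain ⟨N, hN⟩ := hc.2
    obtain ⟨M, hM⟩ := s.finite_toSet.bddAbove
    refine ⟨max N (M + 1), fun i hi => ?_⟩
    rw [hN i (le_of_max_le_left hi), List.count_eq_zero.2 fun hi' => ?_]
    have hiM : i ≤ M := hM hi'
    have hMi : M + 1 ≤ i := le_of_max_le_right hi
    exact (hiM.trans_lt (PNat.lt_add_right M 1)).not_ge hMi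
  simp only [IsPartition, eventually_zero, and_true]
  exact forall_congr' fun i => by have := hc.1 i; omega

lemma forall_alpha_le_iff {c : ℕ+ → ℕ} (hc : IsPartition c) (x : List ℕ+) :
    (∀ i : ℕ+, alpha i x ≤ c i - c (i + 1)) ↔
      ∀ s ∈ x.tails, IsPartition (fun i => c i + s.count i) := by
  simp only [alpha_le_iff, isPartition_add_count_iff hc]
  exact ⟨fun h s hs i => h i s hs, fun h i s hs => h s hs i⟩

lemma addBox_ne_none_iff (i : ℕ+) (c : ℕ+ → ℕ) :
    addBox i c ≠ none ↔ IsPartition (Function.update c i (c i + 1)) := by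
  unfold addBox
  split_ifs with h <;> simp [h]

lemma addBox_of_isPartition {i : ℕ+} {c : ℕ+ → ℕ}
    (h : IsPartition (Function.update c i (c i + 1))) :
    addBox i c = some (Function.update c i (c i + 1)) :=
  if_pos h

lemma schurWord_cons (a : ℕ+) (t : List ℕ+) (c : ℕ+ → ℕ) :
    schurWord (a :: t) c = (schurWord t c).bind (addBox a) :=
  rfl

lemma update_add_count (c : ℕ+ → ℕ) (a : ℕ+) (t : List ℕ+) :
    Function.update (fun i => c i + t.count i) a (c a + t.count a + 1) =
      fun i => c i + (a :: t).count i := by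
  funext i
  rcases eq_or_ne i a with rfl | hia
  · simp [add_assoc]
  · simp [Function.update_of_ne hia, Ne.symm hia]

lemma schurWord_eq_some {x : List ℕ+} {c : ℕ+ → ℕ}
    (h : ∀ s ∈ x.tails, IsPartition (fun i => c i + s.count i)) :
    schurWord x c = some (fun i => c i + x.count i) := by
  induction x with
  | nil => rfl
  | cons a t ih =>
    rw [List.tails_cons, List.forall_mem_cons] at h
    rw [schurWord_cons, ih h.2, Option.bind_some, addBox_of_isPartition, update_add_count]
    simpa only [update_add_count] using h.1

lemma schurWord_ne_none_iff {c : ℕ+ → ℕ} (hc : IsPartition c) (x : List ℕ+) :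
    schurWord x c ≠ none ↔ ∀ s ∈ x.tails, IsPartition (fun i => c i + s.count i) := by
  refine ⟨fun hx => ?_, fun h => by simp [schurWord_eq_some h]⟩
  induction x with
  | nil => simpa using hc
  | cons a t ih =>
    rw [schurWord_cons] at hx
    have ht : ∀ s ∈ t.tails, IsPartition (fun i => c i + s.count i) :=
      ih fun h => by simp [h] at hx
    rw [schurWord_eq_some ht, Option.bind_some, addBox_ne_none_iff, update_add_count] at hx
    exact List.forall_mem_cons.2 ⟨hx, ht⟩

theorem stmt0 (x : List ℕ+) (c : ℕ+ → ℕ) (hc : IsPartition c) :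
    (schurWord x c ≠ none ↔ ∀ i : ℕ+, alpha i x ≤ c i - c (i + 1)) ∧
    ((∀ i : ℕ+, alpha i x ≤ c i - c (i + 1)) →
      schurWord x c = some (fun i => c i + x.count i)) := by
  rw [forall_alpha_le_iff hc]
  exact ⟨schurWord_ne_none_iff hc x, schurWord_eq_some⟩
end

section
/- For all i ≥ 1 and all partitions λ, u_{i+1}(u_{i+2}(u_{i+1}(u_i(λ)))) = u_{i+1}(u_{i+2}(u_i(u_{i+1}(λ)))). -/
/-!
Both sides either vanish or add the boxes `e_i + 2 e_{i+1} + e_{i+2}` to `λ`, and both are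
nonzero exactly when column `i` of `λ` can take a box and `λ'_{i+1} < λ'_i`. A box can always
be added in column `k + 1` right after one was added in column `k`; so on the left `u_i`
decides everything until the last `u_{i+1}`, which needs `λ'_{i+1} < λ'_i`. On the right the
first `u_{i+1}` needs that inequality, and a box in column `i + 1` does not affect whether
column `i` can take one.
-/

theorem PNat.add_one_ne_self (n : ℕ+) : n + 1 ≠ n :=
  (PNat.lt_add_right n 1).ne'

theorem PNat.add_one_add_one_ne_self (n : ℕ+) : n + 1 + 1 ≠ n :=
  ((PNat.lt_add_right n 1).trans (PNat.lt_add_right (n + 1) 1)).ne'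

theorem update_self_add_eq_add_single {ι M : Type*} [DecidableEq ι] [AddZeroClass M]
    (f : ι → M) (i : ι) (a : M) : Function.update f i (f i + a) = f + Pi.single i a := by
  funext j
  rcases eq_or_ne j i with rfl | hj <;> simp [*]

/-- The predecessor `j` of `i` is quantified over to avoid truncated subtraction on `ℕ+`;
for `i = 1` the condition is vacuous. -/
def Addable (i : ℕ+) (c : ℕ+ → ℕ) : Prop :=
  ∀ j : ℕ+, j + 1 = i → c i < c j

theorem addable_succ_iff {k : ℕ+} {c : ℕ+ → ℕ} : Addable (k + 1) c ↔ c (k + 1) < c k :=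
  ⟨fun h => h k rfl, fun h _ hj => add_right_cancel hj ▸ h⟩

theorem addable_add_single_succ_iff {i : ℕ+} {c : ℕ+ → ℕ} :
    Addable i (c + Pi.single (i + 1) 1) ↔ Addable i c := by
  refine forall₂_congr fun j hj => ?_
  have hj : j ≠ i + 1 :=
    (((PNat.lt_add_right j 1).trans_eq hj).trans (PNat.lt_add_right i 1)).ne
  simp [(PNat.add_one_ne_self i).symm, hj]

namespace IsPartition

variable {c : ℕ+ → ℕ}

theorem add_single_iff (hc : IsPartition c) {i : ℕ+} :
    IsPartition (c + Pi.single i 1) ↔ Addable i c := by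
  constructor
  · intro hp j hj
    have hji : j ≠ i := hj ▸ (PNat.add_one_ne_self j).symm
    have := hp.1 j
    simp [hj, hji] at this
    omega
  · intro h
    refine ⟨fun k => ?_, ?_⟩
    · have hk := hc.1 k
      simp only [Pi.add_apply, Pi.single_apply]
      split_ifs with h₁ h₂ h₂
      · exact absurd (h₂ ▸ h₁) (PNat.add_one_ne_self k)
      · have := h k h₁; subst h₁; omega
      · omega
      · omega
    · obtain ⟨N, hN⟩ := hc.2
      refine ⟨N + i, fun j hj => ?_⟩
      have hji : j ≠ i := fun h => (PNat.lt_add_left i N).not_ge (h ▸ hj)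
      simp [hji, hN j ((PNat.lt_add_right N i).le.trans hj)]

theorem add_single (hc : IsPartition c) {i : ℕ+} (h : Addable i c) :
    IsPartition (c + Pi.single i 1) :=
  hc.add_single_iff.2 h

theorem addable_succ_add_single (hc : IsPartition c) (k : ℕ+) :
    Addable (k + 1) (c + Pi.single k 1) := by
  rw [addable_succ_iff]
  have := hc.1 k
  simp [PNat.add_one_ne_self]
  omega

end IsPartition

section

variable {i : ℕ+} {c : ℕ+ → ℕ}

theorem addBox_of_addable (hc : IsPartition c) (h : Addable i c) :
    addBox i c = some (c + Pi.single i 1) := by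
  rw [addBox, update_self_add_eq_add_single, if_pos (hc.add_single h)]

theorem addBox_of_not_addable (hc : IsPartition c) (h : ¬ Addable i c) :
    addBox i c = none := by
  rw [addBox, update_self_add_eq_add_single, if_neg (mt hc.add_single_iff.1 h)]

open Classical in
theorem schurWord_succ_succ_succ_self (hc : IsPartition c) :
    schurWord [i + 1, i + 2, i + 1, i] c =
      if Addable i c ∧ c (i + 1) < c i then
        some (c + Pi.single i 1 + Pi.single (i + 1) 2 + Pi.single (i + 2) 1)
      else none := by
  have h₂ : i + 2 = i + 1 + 1 := add_assoc i 1 1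
  simp only [schurWord, List.foldr, Option.bind_some, h₂]
  by_cases hA : Addable i c
  swap
  · simp [addBox_of_not_addable hc hA, hA]
  have hc₁ := hc.add_single hA
  have hc₂ := hc₁.add_single (hc.addable_succ_add_single i)
  have hc₃ := hc₂.add_single (hc₁.addable_succ_add_single (i + 1))
  rw [addBox_of_addable hc hA, Option.bind_some,
    addBox_of_addable hc₁ (hc.addable_succ_add_single i), Option.bind_some,
    addBox_of_addable hc₂ (hc₁.addable_succ_add_single (i + 1)), Option.bind_some]
  have hB : Addable (i + 1) (c + Pi.single i 1 + Pi.single (i + 1) 1 + Pi.single (i + 1 + 1) 1)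
      ↔ c (i + 1) < c i := by
    simp [addable_succ_iff, PNat.add_one_ne_self, PNat.add_one_add_one_ne_self]
  by_cases hlt : c (i + 1) < c i
  · rw [addBox_of_addable hc₃ (hB.2 hlt), if_pos ⟨hA, hlt⟩,
      show (2 : ℕ) = 1 + 1 from rfl, Pi.single_add]
    congr 1
    abel
  · rw [addBox_of_not_addable hc₃ (mt hB.1 hlt), if_neg (fun h => hlt h.2)]

open Classical in
theorem schurWord_succ_succ_self_succ (hc : IsPartition c) :
    schurWord [i + 1, i + 2, i, i + 1] c =
      if Addable i c ∧ c (i + 1) < c i then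
        some (c + Pi.single i 1 + Pi.single (i + 1) 2 + Pi.single (i + 2) 1)
      else none := by
  have h₂ : i + 2 = i + 1 + 1 := add_assoc i 1 1
  simp only [schurWord, List.foldr, Option.bind_some, h₂]
  by_cases hlt : c (i + 1) < c i
  swap
  · simp [addBox_of_not_addable hc (mt addable_succ_iff.1 hlt), hlt]
  have hc₁ := hc.add_single (addable_succ_iff.2 hlt)
  rw [addBox_of_addable hc (addable_succ_iff.2 hlt), Option.bind_some]
  by_cases hA : Addable i c
  swap
  · simp [addBox_of_not_addable hc₁ (mt addable_add_single_succ_iff.1 hA), hA]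
  have hc₂ := hc₁.add_single (addable_add_single_succ_iff.2 hA)
  have h₃ : Addable (i + 1 + 1) (c + Pi.single (i + 1) 1 + Pi.single i 1) := by
    have := hc.1 (i + 1)
    simp [addable_succ_iff, PNat.add_one_ne_self, PNat.add_one_add_one_ne_self]
    omega
  have hc₃ := hc₂.add_single h₃
  have h₄ :
      Addable (i + 1) (c + Pi.single (i + 1) 1 + Pi.single i 1 + Pi.single (i + 1 + 1) 1) := by
    simpa [addable_succ_iff, PNat.add_one_ne_self, PNat.add_one_add_one_ne_self] using hlt
  rw [addBox_of_addable hc₁ (addable_add_single_succ_iff.2 hA), Option.bind_some,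
    addBox_of_addable hc₂ h₃, Option.bind_some, addBox_of_addable hc₃ h₄,
    if_pos ⟨hA, hlt⟩, show (2 : ℕ) = 1 + 1 from rfl, Pi.single_add]
  congr 1
  abel

end

theorem stmt8 (i : ℕ+) (c : ℕ+ → ℕ) (hc : IsPartition c) :
    schurWord [i + 1, i + 2, i + 1, i] c = schurWord [i + 1, i + 2, i, i + 1] c := by
  rw [schurWord_succ_succ_succ_self hc, schurWord_succ_succ_self_succ hc]
end

section
/- Let x be a word over the positive integers whose minimum letter is i, appearing k times. Then x is Knuth equivalent to a word of the form y = m i^k m' in which all k occurrences of i are consecutive. -/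
/-- An elementary Knuth move on consecutive subwords:
`bac ↔ bca` for `a < b ≤ c`, and `acb ↔ cab` for `a ≤ b < c`. -/
inductive KnuthStep : List ℕ+ → List ℕ+ → Prop
  | k1 (p s : List ℕ+) (a b c : ℕ+) (h1 : a < b) (h2 : b ≤ c) :
      KnuthStep (p ++ [b, a, c] ++ s) (p ++ [b, c, a] ++ s)
  | k2 (p s : List ℕ+) (a b c : ℕ+) (h1 : a ≤ b) (h2 : b < c) :
      KnuthStep (p ++ [a, c, b] ++ s) (p ++ [c, a, b] ++ s)

/-- Knuth equivalence of words. -/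
def KnuthEquiv : List ℕ+ → List ℕ+ → Prop := Relation.EqvGen KnuthStep

/-!
Read the word from left to right, keeping it Knuth equivalent to `m ++ s` with `s` weakly
increasing and every letter of `m` larger than the minimum `i`. Appending a letter `a` to `s` is
Schensted row insertion: if `a` is smaller than some letter of `s`, the first such letter `c` is
bumped out to the left end of `s` by Knuth moves, and `c > a ≥ i` joins `m`. At the end the
copies of `i` form the initial segment of the weakly increasing word `s`.
-/

namespace KnuthEquiv

theorem refl (x : List ℕ+) : KnuthEquiv x x := Relation.EqvGen.refl x

theorem symm {x y : List ℕ+} (h : KnuthEquiv x y) : KnuthEquiv y x :=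
  Relation.EqvGen.symm x y h

theorem trans {x y z : List ℕ+} (h₁ : KnuthEquiv x y) (h₂ : KnuthEquiv y z) : KnuthEquiv x z :=
  Relation.EqvGen.trans x y z h₁ h₂

theorem of_step {x y : List ℕ+} (h : KnuthStep x y) : KnuthEquiv x y :=
  Relation.EqvGen.rel x y h

theorem perm {x y : List ℕ+} (h : KnuthEquiv x y) : x.Perm y := by
  induction h with
  | rel _ _ h =>
    cases h with
    | k1 p s a b c => exact ((List.Perm.swap c a []).cons b |>.append_left p).append_right s
    | k2 p s a b c => exact ((List.Perm.swap c a [b]).append_left p).append_right s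
  | refl => rfl
  | symm _ _ _ ih => exact ih.symm
  | trans _ _ _ _ _ ih₁ ih₂ => exact ih₁.trans ih₂

theorem append_left_append_right {x y : List ℕ+} (h : KnuthEquiv x y) (p s : List ℕ+) :
    KnuthEquiv (p ++ x ++ s) (p ++ y ++ s) := by
  induction h with
  | rel _ _ h =>
    refine of_step ?_
    cases h with
    | k1 p' s' a b c h₁ h₂ => simpa using KnuthStep.k1 (p ++ p') (s' ++ s) a b c h₁ h₂
    | k2 p' s' a b c h₁ h₂ => simpa using KnuthStep.k2 (p ++ p') (s' ++ s) a b c h₁ h₂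
  | refl => exact refl _
  | symm _ _ _ ih => exact ih.symm
  | trans _ _ _ _ _ ih₁ ih₂ => exact ih₁.trans ih₂

theorem append_left {x y : List ℕ+} (h : KnuthEquiv x y) (p : List ℕ+) :
    KnuthEquiv (p ++ x) (p ++ y) := by
  simpa using h.append_left_append_right p []

theorem append_right {x y : List ℕ+} (h : KnuthEquiv x y) (s : List ℕ+) :
    KnuthEquiv (x ++ s) (y ++ s) := by
  simpa using h.append_left_append_right [] s

end KnuthEquiv

open KnuthEquiv

theorem knuthEquiv_cons_append_singleton {c a : ℕ+} {w : List ℕ+}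
    (hw : (c :: w).Pairwise (· ≤ ·)) (hac : a < c) :
    KnuthEquiv (c :: w ++ [a]) (c :: a :: w) := by
  induction w generalizing c with
  | nil => exact refl _
  | cons d w ih =>
    have hcd : c ≤ d := List.rel_of_pairwise_cons hw (by simp)
    exact ((ih (List.Pairwise.of_cons hw) (hac.trans_le hcd)).append_left [c]).trans
      (of_step (KnuthStep.k1 [] w a c d hac hcd)).symm

theorem knuthEquiv_append_cons_cons {p : List ℕ+} {c y : ℕ+} (hp : p.Pairwise (· ≤ ·))
    (hpy : ∀ b ∈ p, b ≤ y) (hyc : y < c) :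
    KnuthEquiv (p ++ [c, y]) (c :: p ++ [y]) := by
  induction p using List.reverseRecOn generalizing y with
  | nil => exact refl _
  | append_singleton p b ih =>
    rw [List.pairwise_append] at hp
    have hby : b ≤ y := hpy b (by simp)
    have hcb : KnuthEquiv (p ++ [c, b]) (c :: p ++ [b]) :=
      ih hp.1 (fun x hx => hp.2.2 x hx b (by simp)) (hby.trans_lt hyc)
    have hstep : KnuthEquiv (p ++ [b] ++ [c, y]) (p ++ [c, b] ++ [y]) := by
      simpa using of_step (KnuthStep.k2 p [] b y c hby hyc)
    simpa using hstep.trans (hcb.append_right [y])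

theorem List.Pairwise.exists_eq_append_forall_le_forall_lt {α : Type*} [LinearOrder α]
    {s : List α} (hs : s.Pairwise (· ≤ ·)) (a : α) :
    ∃ p t, s = p ++ t ∧ (∀ b ∈ p, b ≤ a) ∧ ∀ c ∈ t, a < c := by
  induction s with
  | nil => exact ⟨[], [], rfl, by simp, by simp⟩
  | cons d s ih =>
    rw [List.pairwise_cons] at hs
    by_cases hda : d ≤ a
    · obtain ⟨p, t, rfl, hp, ht⟩ := ih hs.2
      exact ⟨d :: p, t, rfl, by simpa [hda] using hp, ht⟩
    · rw [not_le] at hda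
      exact ⟨[], d :: s, rfl, by simp,
        by simpa [hda] using fun c hc => hda.trans_le (hs.1 c hc)⟩

theorem exists_knuthEquiv_rowInsert {s : List ℕ+} (hs : s.Pairwise (· ≤ ·)) (a : ℕ+) :
    ∃ b s', (∀ c ∈ b, a < c) ∧ s'.Pairwise (· ≤ ·) ∧ KnuthEquiv (s ++ [a]) (b ++ s') := by
  obtain ⟨p, t, rfl, hpa, hat⟩ := hs.exists_eq_append_forall_le_forall_lt a
  rw [List.pairwise_append] at hs
  obtain ⟨hp, ht, -⟩ := hs
  cases t with
  | nil =>
    refine ⟨[], p ++ [a], by simp, ?_, by simpa using refl (p ++ [a])⟩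
    simpa [List.pairwise_append] using ⟨hp, hpa⟩
  | cons c t =>
    have hac : a < c := hat c (by simp)
    refine ⟨[c], p ++ a :: t, by simpa using hac, ?_, ?_⟩
    · have hat' : ∀ d ∈ t, a ≤ d := fun d hd => (hat d (by simp [hd])).le
      simp only [List.pairwise_append, List.pairwise_cons]
      exact ⟨hp, ⟨hat', ht.of_cons⟩, fun b hb d hd =>
        (hpa b hb).trans (by rcases List.mem_cons.1 hd with rfl | hd; exacts [le_rfl, hat' d hd])⟩
    · have h₁ := (knuthEquiv_cons_append_singleton ht hac).append_left p
      have h₂ : KnuthEquiv (p ++ c :: a :: t) (c :: (p ++ a :: t)) := by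
        simpa using (knuthEquiv_append_cons_cons hp hpa hac).append_right t
      simpa using h₁.trans h₂

theorem exists_knuthEquiv_append_pairwise {x : List ℕ+} {i : ℕ+} (hx : ∀ a ∈ x, i ≤ a) :
    ∃ m s, (∀ b ∈ m, i < b) ∧ s.Pairwise (· ≤ ·) ∧ KnuthEquiv x (m ++ s) := by
  induction x using List.reverseRecOn with
  | nil => exact ⟨[], [], by simp, by simp, refl _⟩
  | append_singleton x a ih =>
    obtain ⟨m, s, hm, hs, hxs⟩ := ih fun b hb => hx b (by simp [hb])
    obtain ⟨b, s', hb, hs', hss'⟩ := exists_knuthEquiv_rowInsert hs a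
    have hia : i ≤ a := hx a (by simp)
    refine ⟨m ++ b, s', ?_, hs', ?_⟩
    · exact fun c hc => (List.mem_append.1 hc).elim (hm c) fun hc => hia.trans_lt (hb c hc)
    · simpa using (hxs.append_right [a]).trans (by simpa using hss'.append_left m)

theorem List.Pairwise.eq_replicate_count_append {α : Type*} [LinearOrder α]
    {s : List α} {i : α}
    (hs : s.Pairwise (· ≤ ·)) (hi : ∀ a ∈ s, i ≤ a) :
    ∃ s', i ∉ s' ∧ s = List.replicate (s.count i) i ++ s' := by
  induction s with
  | nil => exact ⟨[], by simp, rfl⟩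
  | cons d s ih =>
    rw [List.pairwise_cons] at hs
    by_cases hdi : d = i
    · subst hdi
      obtain ⟨s', hs', hss'⟩ := ih hs.2 fun a ha => hi a (by simp [ha])
      exact ⟨s', hs', by rw [List.count_cons_self, List.replicate_succ, List.cons_append, ← hss']⟩
    · have hid : i < d := lt_of_le_of_ne (hi d (by simp)) (Ne.symm hdi)
      have hnot : i ∉ d :: s := by
        simpa [Ne.symm hdi] using fun h => (hid.trans_le (hs.1 i h)).false
      exact ⟨d :: s, hnot, by simp [List.count_eq_zero.2 hnot]⟩

theorem stmt11_general (x : List ℕ+) (i : ℕ+) (hmin : ∀ a ∈ x, i ≤ a) :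
    ∃ m m' : List ℕ+, i ∉ m ∧ i ∉ m' ∧
      KnuthEquiv x (m ++ List.replicate (x.count i) i ++ m') := by
  obtain ⟨m, s, hm, hs, hxs⟩ := exists_knuthEquiv_append_pairwise hmin
  have him : i ∉ m := fun h => (hm i h).false
  obtain ⟨m', hm', hs'⟩ :=
    hs.eq_replicate_count_append fun a ha => hmin a (hxs.perm.mem_iff.2 (by simp [ha]))
  have hcount : x.count i = s.count i := by
    rw [hxs.perm.count_eq, List.count_append, List.count_eq_zero.2 him, zero_add]
  refine ⟨m, m', him, hm', ?_⟩
  rwa [hcount, List.append_assoc, ← hs']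

theorem stmt11 (x : List ℕ+) (i : ℕ+) (hmem : i ∈ x) (hmin : ∀ a ∈ x, i ≤ a) :
    ∃ m m' : List ℕ+, i ∉ m ∧ i ∉ m' ∧
      KnuthEquiv x (m ++ List.replicate (x.count i) i ++ m') :=
  stmt11_general x i hmin
end

section
/- The words x = 2321 and y = 2312 act identically as Schur operators on all partitions (u_x = u_y on C[Y]), but x and y are not related by any sequence of local plactic moves (1) commutations ij ↔ ji for |i−j| ≥ 2, (2) i(i+1)i ↔ (i+1)ii, (3) (i+1)(i+1)i ↔ (i+1)i(i+1); i.e., relation (4) is not a consequence of (1)–(3) in the local plactic monoid. -/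
/-- One application of one of the local plactic relations (1)–(3) to a
consecutive subword. -/
inductive LPStep : List ℕ+ → List ℕ+ → Prop
  | comm (p s : List ℕ+) (a b : ℕ+) (h : 2 ≤ |((a : ℕ) : ℤ) - ((b : ℕ) : ℤ)|) :
      LPStep (p ++ [a, b] ++ s) (p ++ [b, a] ++ s)
  | rel2 (p s : List ℕ+) (i : ℕ+) :
      LPStep (p ++ [i, i + 1, i] ++ s) (p ++ [i + 1, i, i] ++ s)
  | rel3 (p s : List ℕ+) (i : ℕ+) :
      LPStep (p ++ [i + 1, i + 1, i] ++ s) (p ++ [i + 1, i, i + 1] ++ s)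

/-- The local plactic congruence, generated by relations (1)–(3). -/
def LPEquiv : List ℕ+ → List ℕ+ → Prop := Relation.EqvGen LPStep

lemma one_ne_succ (j : ℕ+) : (1 : ℕ+) ≠ j + 1 := by
  intro h
  have h' : (1 : ℕ) = (j : ℕ) + 1 := congrArg PNat.val h
  have := j.pos
  omega

lemma ne_succ_self (j : ℕ+) : j ≠ j + 1 := by
  intro h
  have h' : (j : ℕ) = (j : ℕ) + 1 := congrArg PNat.val h
  omega

lemma succ_eq_two {j : ℕ+} (h : (2:ℕ+) = j + 1) : j = 1 := by
  have h' : (2 : ℕ) = (j : ℕ) + 1 := congrArg PNat.val h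
  exact PNat.coe_injective (show (j:ℕ) = ((1:ℕ+):ℕ) by rw [PNat.one_coe]; omega)

lemma succ_eq_three {j : ℕ+} (h : (3:ℕ+) = j + 1) : j = 2 := by
  have h' : (3 : ℕ) = (j : ℕ) + 1 := congrArg PNat.val h
  exact PNat.coe_injective (show (j:ℕ) = ((2:ℕ+):ℕ) by norm_num; omega)

lemma isPartition_update {c : ℕ+ → ℕ} (hc : IsPartition c) (i : ℕ+)
    (h : ∀ j : ℕ+, i = j + 1 → c i < c j) :
    IsPartition (Function.update c i (c i + 1)) := by
  obtain ⟨hmono, N, hN⟩ := hc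
  constructor
  · intro k
    by_cases hki : k + 1 = i
    · rw [hki, Function.update_self, Function.update_of_ne]
      · exact h k hki.symm
      · intro hk
        exact ne_succ_self k (by rw [← hk] at hki; exact hki.symm)
    · rw [Function.update_of_ne hki]
      by_cases hk : k = i
      · subst hk
        rw [Function.update_self]
        exact le_trans (hmono k) (Nat.le_succ _)
      · rw [Function.update_of_ne hk]
        exact hmono k
  · refine ⟨N + i, fun j hj => ?_⟩
    have hj' : (N : ℕ) + (i : ℕ) ≤ (j : ℕ) := hj
    have hji : j ≠ i := by
      intro h'
      subst h'
      have := N.pos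
      omega
    rw [Function.update_of_ne hji]
    apply hN
    show (N : ℕ) ≤ (j : ℕ)
    omega

lemma addBox_pos {c : ℕ+ → ℕ} (hc : IsPartition c) (i : ℕ+)
    (h : ∀ j : ℕ+, i = j + 1 → c i < c j) :
    addBox i c = some (Function.update c i (c i + 1)) := by
  rw [addBox, if_pos (isPartition_update hc i h)]

lemma addBox_neg {c : ℕ+ → ℕ} {i j : ℕ+} (hij : i = j + 1) (h : c i ≥ c j) :
    addBox i c = none := by
  rw [addBox, if_neg]
  intro hP
  have h1 := hP.1 j
  have hji : j ≠ i := by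
    intro h'
    exact ne_succ_self j (by rw [← hij]; exact h')
  rw [← hij, Function.update_self, Function.update_of_ne hji] at h1
  omega



def Good (l : List ℕ+) : Prop :=
  l = [2,3,2,1] ∨ l = [3,2,2,1] ∨ l = [3,2,1,2]

lemma psucc_eq_iff (i : ℕ+) (n : ℕ+) : i + 1 = n + 1 ↔ i = n := by
  constructor
  · intro h
    have h' : (i : ℕ) + 1 = (n : ℕ) + 1 := congrArg PNat.val h
    exact PNat.coe_injective (by omega)
  · intro h; rw [h]

lemma psucc1 (i : ℕ+) : i + 1 = 1 ↔ False := by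
  simp only [iff_false]
  intro h
  have h' : (i : ℕ) + 1 = 1 := congrArg PNat.val h
  have := i.pos
  omega

lemma psucc2 (i : ℕ+) : i + 1 = 2 ↔ i = 1 := by
  have : (2:ℕ+) = 1 + 1 := by decide
  rw [this, psucc_eq_iff]

lemma psucc3 (i : ℕ+) : i + 1 = 3 ↔ i = 2 := by
  have : (3:ℕ+) = 2 + 1 := by decide
  rw [this, psucc_eq_iff]

lemma psucc1' (i : ℕ+) : (1:ℕ+) = i + 1 ↔ False := by rw [eq_comm, psucc1]
lemma psucc2' (i : ℕ+) : (2:ℕ+) = i + 1 ↔ i = 1 := by rw [eq_comm, psucc2]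
lemma psucc3' (i : ℕ+) : (3:ℕ+) = i + 1 ↔ i = 2 := by rw [eq_comm, psucc3]
lemma e11 : (1:ℕ+) + 1 = 2 := by decide
lemma e21 : (2:ℕ+) + 1 = 3 := by decide
lemma n12 : ((1:ℕ+) = 2) ↔ False := by decide
lemma n13 : ((1:ℕ+) = 3) ↔ False := by decide
lemma n21 : ((2:ℕ+) = 1) ↔ False := by decide
lemma n23 : ((2:ℕ+) = 3) ↔ False := by decide
lemma n31 : ((3:ℕ+) = 1) ↔ False := by decide
lemma n32 : ((3:ℕ+) = 2) ↔ False := by decide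

lemma good_step {a b : List ℕ+} (h : LPStep a b) : Good a ↔ Good b := by
  cases h with
  | comm p s x y hxy =>
    constructor <;> intro hg <;> exfalso <;>
      rcases p with _ | ⟨p1, _ | ⟨p2, _ | ⟨p3, p⟩⟩⟩ <;>
      rcases hg with hg | hg | hg <;>
      simp_all [Good, List.append_eq_cons_iff]
  | rel2 p s i =>
    constructor <;> intro hg <;>
      rcases p with _ | ⟨p1, _ | ⟨p2, p⟩⟩ <;>
      rcases hg with hg | hg | hg <;>
      simp_all [Good, List.append_eq_cons_iff, List.cons_eq_append_iff, psucc1, psucc2, psucc3,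
        psucc1', psucc2', psucc3', e11, e21, n12, n13, n21, n23, n31, n32] <;>
      first
      | (obtain ⟨h1, h2, -⟩ := hg; rw [h1] at h2; revert h2; decide)
      | (obtain ⟨-, h1, h2, -⟩ := hg; rw [h1] at h2; revert h2; decide)
  | rel3 p s i =>
    constructor <;> intro hg <;>
      rcases p with _ | ⟨p1, _ | ⟨p2, p⟩⟩ <;>
      rcases hg with hg | hg | hg <;>
      simp_all [Good, List.append_eq_cons_iff, List.cons_eq_append_iff, psucc1, psucc2, psucc3,
        psucc1', psucc2', psucc3', e11, e21, n12, n13, n21, n23, n31, n32] <;>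
      first
      | (obtain ⟨h1, h2, -⟩ := hg; rw [h1] at h2; revert h2; decide)
      | (obtain ⟨-, h1, h2, -⟩ := hg; rw [h1] at h2; revert h2; decide)

lemma good_equiv {a b : List ℕ+} (h : Relation.EqvGen LPStep a b) : Good a ↔ Good b := by
  induction h with
  | rel _ _ h => exact good_step h
  | refl => exact Iff.rfl
  | symm _ _ _ ih => exact ih.symm
  | trans _ _ _ _ _ ih1 ih2 => exact ih1.trans ih2


theorem stmt18 :
    (∀ c : ℕ+ → ℕ, IsPartition c →
      schurWord ([2, 3, 2, 1] : List ℕ+) c = schurWord ([2, 3, 1, 2] : List ℕ+) c) ∧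
    ¬ LPEquiv ([2, 3, 2, 1] : List ℕ+) ([2, 3, 1, 2] : List ℕ+) := by
  constructor
  · intro c hc
    have e2 : (2:ℕ+) = 1 + 1 := by decide
    have e3 : (3:ℕ+) = 2 + 1 := by decide
    have hmono := hc.1
    have h21 : c 2 ≤ c 1 := by rw [e2]; exact hmono 1
    have h32 : c 3 ≤ c 2 := by rw [e3]; exact hmono 2
    -- LHS first three steps always succeed
    have hb1 : addBox 1 c = some (Function.update c 1 (c 1 + 1)) :=
      addBox_pos hc 1 (fun j hj => absurd hj (one_ne_succ j))
    set c1 : ℕ+ → ℕ := Function.update c 1 (c 1 + 1) with hc1def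
    have hP1 : IsPartition c1 := isPartition_update hc 1 (fun j hj => absurd hj (one_ne_succ j))
    have hc1_1 : c1 1 = c 1 + 1 := Function.update_self _ _ _
    have hc1_2 : c1 2 = c 2 := Function.update_of_ne (by decide) _ _
    have hc1_3 : c1 3 = c 3 := Function.update_of_ne (by decide) _ _
    have hb2 : addBox 2 c1 = some (Function.update c1 2 (c1 2 + 1)) := by
      apply addBox_pos hP1 2
      intro j hj
      rw [succ_eq_two hj, hc1_1, hc1_2]
      omega
    set c2 : ℕ+ → ℕ := Function.update c1 2 (c1 2 + 1) with hc2def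
    have hP2 : IsPartition c2 := isPartition_update hP1 2 (by
      intro j hj; rw [succ_eq_two hj, hc1_1, hc1_2]; omega)
    have hc2_1 : c2 1 = c 1 + 1 := by rw [hc2def, Function.update_of_ne (by decide), hc1_1]
    have hc2_2 : c2 2 = c 2 + 1 := by rw [hc2def, Function.update_self, hc1_2]
    have hc2_3 : c2 3 = c 3 := by rw [hc2def, Function.update_of_ne (by decide), hc1_3]
    have hb3 : addBox 3 c2 = some (Function.update c2 3 (c2 3 + 1)) := by
      apply addBox_pos hP2 3
      intro j hj
      rw [succ_eq_three hj, hc2_3, hc2_2]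
      omega
    set c3 : ℕ+ → ℕ := Function.update c2 3 (c2 3 + 1) with hc3def
    have hP3 : IsPartition c3 := isPartition_update hP2 3 (by
      intro j hj; rw [succ_eq_three hj, hc2_3, hc2_2]; omega)
    have hc3_1 : c3 1 = c 1 + 1 := by rw [hc3def, Function.update_of_ne (by decide), hc2_1]
    have hc3_2 : c3 2 = c 2 + 1 := by rw [hc3def, Function.update_of_ne (by decide), hc2_2]
    have hc3_3 : c3 3 = c 3 + 1 := by rw [hc3def, Function.update_self, hc2_3]
    simp only [schurWord, List.foldr, Option.bind_eq_bind, Option.bind_some]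
    rw [hb1, Option.bind_some, hb2, Option.bind_some, hb3, Option.bind_some]
    rcases lt_or_eq_of_le h21 with hlt | heq
    · -- c 2 < c 1 : both sides succeed and agree
      have hb4 : addBox 2 c3 = some (Function.update c3 2 (c3 2 + 1)) := by
        apply addBox_pos hP3 2
        intro j hj
        rw [succ_eq_two hj, hc3_1, hc3_2]
        omega
      rw [hb4]
      -- RHS
      have hd1 : addBox 2 c = some (Function.update c 2 (c 2 + 1)) := by
        apply addBox_pos hc 2
        intro j hj; rw [succ_eq_two hj]; omega
      set d1 : ℕ+ → ℕ := Function.update c 2 (c 2 + 1) with hd1def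
      have hQ1 : IsPartition d1 := isPartition_update hc 2 (by
        intro j hj; rw [succ_eq_two hj]; omega)
      have hd1_1 : d1 1 = c 1 := by rw [hd1def, Function.update_of_ne (by decide)]
      have hd1_2 : d1 2 = c 2 + 1 := Function.update_self _ _ _
      have hd1_3 : d1 3 = c 3 := by rw [hd1def, Function.update_of_ne (by decide)]
      have hd2 : addBox 1 d1 = some (Function.update d1 1 (d1 1 + 1)) :=
        addBox_pos hQ1 1 (fun j hj => absurd hj (one_ne_succ j))
      set d2 : ℕ+ → ℕ := Function.update d1 1 (d1 1 + 1) with hd2def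
      have hQ2 : IsPartition d2 := isPartition_update hQ1 1
        (fun j hj => absurd hj (one_ne_succ j))
      have hd2_1 : d2 1 = c 1 + 1 := by rw [hd2def, Function.update_self, hd1_1]
      have hd2_2 : d2 2 = c 2 + 1 := by rw [hd2def, Function.update_of_ne (by decide), hd1_2]
      have hd2_3 : d2 3 = c 3 := by rw [hd2def, Function.update_of_ne (by decide), hd1_3]
      have hd3 : addBox 3 d2 = some (Function.update d2 3 (d2 3 + 1)) := by
        apply addBox_pos hQ2 3
        intro j hj; rw [succ_eq_three hj, hd2_3, hd2_2]; omega
      set d3 : ℕ+ → ℕ := Function.update d2 3 (d2 3 + 1) with hd3def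
      have hQ3 : IsPartition d3 := isPartition_update hQ2 3 (by
        intro j hj; rw [succ_eq_three hj, hd2_3, hd2_2]; omega)
      have hd3_1 : d3 1 = c 1 + 1 := by rw [hd3def, Function.update_of_ne (by decide), hd2_1]
      have hd3_2 : d3 2 = c 2 + 1 := by rw [hd3def, Function.update_of_ne (by decide), hd2_2]
      have hd3_3 : d3 3 = c 3 + 1 := by rw [hd3def, Function.update_self, hd2_3]
      have hd4 : addBox 2 d3 = some (Function.update d3 2 (d3 2 + 1)) := by
        apply addBox_pos hQ3 2
        intro j hj; rw [succ_eq_two hj, hd3_1, hd3_2]; omega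
      rw [hd1, Option.bind_some, hd2, Option.bind_some, hd3, Option.bind_some, hd4]
      congr 1
      funext j
      by_cases j1 : j = 1
      · subst j1
        rw [Function.update_of_ne (by decide), hc3_1,
            Function.update_of_ne (by decide), hd3_1]
      by_cases j2 : j = 2
      · subst j2
        rw [Function.update_self, Function.update_self, hc3_2, hd3_2]
      by_cases j3 : j = 3
      · subst j3
        rw [Function.update_of_ne (by decide), hc3_3,
            Function.update_of_ne (by decide), hd3_3]
      · rw [Function.update_of_ne j2, Function.update_of_ne j2,
            hc3def, Function.update_of_ne j3, hc2def, Function.update_of_ne j2,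
            hc1def, Function.update_of_ne j1,
            hd3def, Function.update_of_ne j3, hd2def, Function.update_of_ne j1,
            hd1def, Function.update_of_ne j2]
    · -- c 2 = c 1 : both sides are none
      have hb4 : addBox 2 c3 = none := by
        apply addBox_neg e2
        rw [hc3_1, hc3_2]
        omega
      have hd1 : addBox 2 c = none := by
        apply addBox_neg e2
        omega
      rw [hb4, hd1]
      rfl
  · intro h
    have h1 : Good [2,3,2,1] := Or.inl rfl
    have h2 := (good_equiv h).mp h1
    rcases h2 with h2 | h2 | h2 <;> revert h2 <;> decide
end
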